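/- Let q, r : ℝ → ℝ be three times differentiable and fix λ ∈ ℝ. Define L(x) = [[-λ, q(x)],[r(x), λ]] and U₄(x) = [[-λ³ + (1/2)qrλ - (1/4)rq' + (1/4)qr', qλ² - (1/2)q'λ + (1/4)q'' - (1/2)q²r],[rλ² + (1/2)r'λ + (1/4)r'' - (1/2)qr², λ³ - (1/2)qrλ + (1/4)rq' - (1/4)qr']] (all functions evaluated at x, primes denoting d/dx). Then for all x, U₄(x)·L(x) - L(x)·U₄(x) + U₄'(x) equals [[0, (1/4)q'''(x) - (3/2)q(x)r(x)q'(x)],[(1/4)r'''(x) - (3/2)q(x)r(x)r'(x), 0]]. -/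

import Mathlib

/-! Only two entries of `U₄` have to be differentiated: `U₄` is trace-free, and its `(1,0)` entry
is its `(0,1)` entry under the symmetry `q ↔ r, λ ↦ -λ`. Adding the derivatives to the explicit
commutator of `U₄` with the Lax matrix, every power of `λ` cancels entrywise. -/

namespace AKNS

theorem commutator_lax {R : Type*} [CommRing R] (a b c d lam q r : R) :
    !![a, b; c, d] * !![-lam, q; r, lam] - !![-lam, q; r, lam] * !![a, b; c, d] =
      !![b * r - q * c, (a - d) * q + 2 * lam * b; (d - a) * r - 2 * lam * c, c * q - r * b] := by
  simp only [Matrix.mul_fin_two, Matrix.of_sub_of, Matrix.cons_sub_cons, Matrix.empty_sub_empty,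
    EmbeddingLike.apply_eq_iff_eq, Matrix.vecCons_inj, and_true]
  refine ⟨⟨?_, ?_⟩, ?_, ?_⟩ <;> ring

variable {𝕜 : Type*} [RCLike 𝕜]

noncomputable def U₄ (q r : 𝕜 → 𝕜) (lam y : 𝕜) : Matrix (Fin 2) (Fin 2) 𝕜 :=
  !![-lam ^ 3 + 1 / 2 * q y * r y * lam - 1 / 4 * r y * deriv q y
        + 1 / 4 * q y * deriv r y,
     q y * lam ^ 2 - 1 / 2 * deriv q y * lam + 1 / 4 * deriv (deriv q) y
        - 1 / 2 * (q y) ^ 2 * r y;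
     r y * lam ^ 2 + 1 / 2 * deriv r y * lam + 1 / 4 * deriv (deriv r) y
        - 1 / 2 * q y * (r y) ^ 2,
     lam ^ 3 - 1 / 2 * q y * r y * lam + 1 / 4 * r y * deriv q y
        - 1 / 4 * q y * deriv r y]

theorem U₄_one_one (q r : 𝕜 → 𝕜) (lam y : 𝕜) : U₄ q r lam y 1 1 = -U₄ q r lam y 0 0 := by
  simp only [U₄, Matrix.of_apply, Matrix.cons_val_one, Matrix.cons_val_zero]
  ring

theorem U₄_one_zero (q r : 𝕜 → 𝕜) (lam y : 𝕜) : U₄ q r lam y 1 0 = U₄ r q (-lam) y 0 1 := by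
  simp only [U₄, Matrix.of_apply, Matrix.cons_val_one, Matrix.cons_val_zero]
  ring

variable {q r : 𝕜 → 𝕜} {x : 𝕜}

theorem hasDerivAt_U₄_zero_zero (lam : 𝕜) (hq : DifferentiableAt 𝕜 q x)
    (hq' : DifferentiableAt 𝕜 (deriv q) x) (hr : DifferentiableAt 𝕜 r x)
    (hr' : DifferentiableAt 𝕜 (deriv r) x) :
    HasDerivAt (fun y => U₄ q r lam y 0 0)
      (1 / 2 * (deriv q x * r x + q x * deriv r x) * lam
        + 1 / 4 * (q x * deriv (deriv r) x - r x * deriv (deriv q) x)) x := by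
  have h := (((((hq.hasDerivAt.const_mul (1 / 2)).mul hr.hasDerivAt).mul_const lam).const_add
    (-lam ^ 3)).sub ((hr.hasDerivAt.const_mul (1 / 4)).mul hq'.hasDerivAt)).add
    ((hq.hasDerivAt.const_mul (1 / 4)).mul hr'.hasDerivAt)
  exact h.congr_deriv (by ring)

theorem hasDerivAt_U₄_zero_one (lam : 𝕜) (hq : DifferentiableAt 𝕜 q x)
    (hq' : DifferentiableAt 𝕜 (deriv q) x) (hq'' : DifferentiableAt 𝕜 (deriv (deriv q)) x)
    (hr : DifferentiableAt 𝕜 r x) :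
    HasDerivAt (fun y => U₄ q r lam y 0 1)
      (deriv q x * lam ^ 2 - 1 / 2 * deriv (deriv q) x * lam
        + 1 / 4 * deriv (deriv (deriv q)) x
        - q x * deriv q x * r x - 1 / 2 * q x ^ 2 * deriv r x) x := by
  have h := (((hq.hasDerivAt.mul_const (lam ^ 2)).sub
    ((hq'.hasDerivAt.const_mul (1 / 2)).mul_const lam)).add
    (hq''.hasDerivAt.const_mul (1 / 4))).sub
    (((hq.hasDerivAt.pow 2).const_mul (1 / 2)).mul hr.hasDerivAt)
  exact h.congr_deriv (by simp only [Pi.pow_apply]; ring)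

theorem of_deriv_U₄ (lam : 𝕜) (hq : DifferentiableAt 𝕜 q x)
    (hq' : DifferentiableAt 𝕜 (deriv q) x) (hq'' : DifferentiableAt 𝕜 (deriv (deriv q)) x)
    (hr : DifferentiableAt 𝕜 r x) (hr' : DifferentiableAt 𝕜 (deriv r) x)
    (hr'' : DifferentiableAt 𝕜 (deriv (deriv r)) x) :
    Matrix.of (fun i j => deriv (fun y => U₄ q r lam y i j) x) =
      !![1 / 2 * (deriv q x * r x + q x * deriv r x) * lam
            + 1 / 4 * (q x * deriv (deriv r) x - r x * deriv (deriv q) x),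
          deriv q x * lam ^ 2 - 1 / 2 * deriv (deriv q) x * lam
            + 1 / 4 * deriv (deriv (deriv q)) x
            - q x * deriv q x * r x - 1 / 2 * q x ^ 2 * deriv r x;
        deriv r x * (-lam) ^ 2 - 1 / 2 * deriv (deriv r) x * -lam
            + 1 / 4 * deriv (deriv (deriv r)) x
            - r x * deriv r x * q x - 1 / 2 * r x ^ 2 * deriv q x,
          -(1 / 2 * (deriv q x * r x + q x * deriv r x) * lam
            + 1 / 4 * (q x * deriv (deriv r) x - r x * deriv (deriv q) x))] := by
  rw [Matrix.eta_fin_two (Matrix.of _)]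
  simp only [Matrix.of_apply, U₄_one_zero, U₄_one_one, deriv.fun_neg,
    (hasDerivAt_U₄_zero_zero lam hq hq' hr hr').deriv,
    (hasDerivAt_U₄_zero_one lam hq hq' hq'' hr).deriv,
    (hasDerivAt_U₄_zero_one (-lam) hr hr' hr'' hq).deriv]

end AKNS

theorem akns_fourth_flow_lax (q r : ℝ → ℝ) (lam : ℝ)
    (hq : Differentiable ℝ q) (hq' : Differentiable ℝ (deriv q))
    (hq'' : Differentiable ℝ (deriv (deriv q)))
    (hr : Differentiable ℝ r) (hr' : Differentiable ℝ (deriv r))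
    (hr'' : Differentiable ℝ (deriv (deriv r))) :
    ∀ x : ℝ,
      let L : ℝ → Matrix (Fin 2) (Fin 2) ℝ := fun y => !![-lam, q y; r y, lam]
      let U₄ : ℝ → Matrix (Fin 2) (Fin 2) ℝ := fun y =>
        !![-lam ^ 3 + 1 / 2 * q y * r y * lam - 1 / 4 * r y * deriv q y
              + 1 / 4 * q y * deriv r y,
           q y * lam ^ 2 - 1 / 2 * deriv q y * lam + 1 / 4 * deriv (deriv q) y
              - 1 / 2 * (q y) ^ 2 * r y;
           r y * lam ^ 2 + 1 / 2 * deriv r y * lam + 1 / 4 * deriv (deriv r) y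
              - 1 / 2 * q y * (r y) ^ 2,
           lam ^ 3 - 1 / 2 * q y * r y * lam + 1 / 4 * r y * deriv q y
              - 1 / 4 * q y * deriv r y]
      U₄ x * L x - L x * U₄ x + Matrix.of (fun i j => deriv (fun y => U₄ y i j) x)
        = !![0, 1 / 4 * deriv (deriv (deriv q)) x - 3 / 2 * q x * r x * deriv q x;
             1 / 4 * deriv (deriv (deriv r)) x - 3 / 2 * q x * r x * deriv r x, 0] := by
  intro x L U₄
  change AKNS.U₄ q r lam x * !![-lam, q x; r x, lam] - !![-lam, q x; r x, lam] * AKNS.U₄ q r lam x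
    + Matrix.of (fun i j => deriv (fun y => AKNS.U₄ q r lam y i j) x) = _
  rw [AKNS.of_deriv_U₄ lam (hq x) (hq' x) (hq'' x) (hr x) (hr' x) (hr'' x), AKNS.U₄,
    AKNS.commutator_lax]
  simp only [Matrix.of_add_of, Matrix.cons_add_cons, Matrix.empty_add_empty,
    EmbeddingLike.apply_eq_iff_eq, Matrix.vecCons_inj, and_true]
  refine ⟨⟨?_, ?_⟩, ?_, ?_⟩ <;> ring
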